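/- Khintchine's inequality lower half: for every 0 < r < ∞ there is a constant C_r such that for every finite family of reals (x_i)_{i∈A}, (Ave_{ε_i=±1} |∑_{i∈A} ε_i x_i|^r)^{1/r} ≤ C_r (∑_{i∈A} x_i^2)^{1/2}. -/

import Mathlib

/-
Bound `|t|^r` by a multiple of `cosh t`: from `s ≤ exp (s - 1)` at `s = |t|/r` one gets
`|t|^r ≤ (r/e)^r (e^t + e^{-t})`. The exponential moment of a Rademacher sum factorises,
`Ave_ε exp (∑ εᵢ yᵢ) = ∏ cosh yᵢ ≤ exp (∑ yᵢ² / 2)`. After scaling `x` to unit Euclidean norm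
this gives `Ave_ε |∑ εᵢ xᵢ|^r ≤ 2 e^{1/2} (r/e)^r (∑ xᵢ²)^{r/2}`.
-/

open Real Finset

namespace Khintchine

variable {ι : Type*} [Fintype ι]

def signedSum (ε : ι → Bool) (x : ι → ℝ) : ℝ :=
  ∑ i, (if ε i then 1 else -1) * x i

lemma signedSum_neg (ε : ι → Bool) (x : ι → ℝ) : signedSum ε (-x) = -signedSum ε x := by
  simp [signedSum]

lemma signedSum_smul (ε : ι → Bool) (c : ℝ) (x : ι → ℝ) :
    signedSum ε (c • x) = c * signedSum ε x := by
  simp only [signedSum, Pi.smul_apply, smul_eq_mul, mul_sum, mul_left_comm]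

lemma sum_exp_signedSum [DecidableEq ι] (y : ι → ℝ) :
    ∑ ε : ι → Bool, exp (signedSum ε y) = ∏ i, 2 * cosh (y i) := by
  simp_rw [signedSum, exp_sum]
  rw [← Fintype.prod_sum fun i (b : Bool) => exp ((if b then 1 else -1) * y i)]
  refine prod_congr rfl fun i _ => ?_
  simp [cosh_eq]
  ring

lemma sum_exp_signedSum_le [DecidableEq ι] (y : ι → ℝ) :
    ∑ ε : ι → Bool, exp (signedSum ε y) ≤ 2 ^ Fintype.card ι * exp ((∑ i, y i ^ 2) / 2) := by
  rw [sum_exp_signedSum, ← Finset.card_univ, ← prod_const, sum_div, exp_sum, ← prod_mul_distrib]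
  gcongr with i
  exact cosh_le_exp_half_sq (y i)

lemma abs_rpow_le_exp_add_exp {r : ℝ} (hr : 0 < r) (t : ℝ) :
    |t| ^ r ≤ (r / exp 1) ^ r * (exp t + exp (-t)) := by
  have hlin : |t| / r ≤ exp (|t| / r - 1) := by simpa using add_one_le_exp (|t| / r - 1)
  have habs : exp |t| ≤ exp t + exp (-t) := by
    rcases abs_cases t with ⟨h, _⟩ | ⟨h, _⟩ <;> rw [h] <;> linarith [exp_pos t, exp_pos (-t)]
  calc |t| ^ r = r ^ r * (|t| / r) ^ r := by
        rw [← mul_rpow hr.le (by positivity), mul_div_cancel₀ _ hr.ne']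
    _ ≤ r ^ r * exp (|t| / r - 1) ^ r := by gcongr
    _ = (r / exp 1) ^ r * exp |t| := by
        rw [div_rpow hr.le (exp_pos 1).le, exp_one_rpow, ← exp_mul, sub_mul,
          div_mul_cancel₀ _ hr.ne', one_mul, exp_sub]
        ring
    _ ≤ (r / exp 1) ^ r * (exp t + exp (-t)) := by gcongr

theorem sum_abs_signedSum_rpow_le [DecidableEq ι] {r : ℝ} (hr : 0 < r) (x : ι → ℝ) :
    ∑ ε : ι → Bool, |signedSum ε x| ^ r ≤
      2 ^ Fintype.card ι * (2 * (r / exp 1) ^ r * exp (1 / 2) * √(∑ i, x i ^ 2) ^ r) := by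
  set σ := √(∑ i, x i ^ 2)
  have hσ_nonneg : 0 ≤ σ := sqrt_nonneg _
  have hσ_sq : σ ^ 2 = ∑ i, x i ^ 2 := sq_sqrt (sum_nonneg fun i _ => sq_nonneg (x i))
  rcases hσ_nonneg.eq_or_lt with hσ_zero | hσ_pos
  · have hx : x = 0 := by
      funext i
      rw [← hσ_zero, zero_pow two_ne_zero, eq_comm] at hσ_sq
      simpa using (sum_eq_zero_iff_of_nonneg fun i _ => sq_nonneg (x i)).1 hσ_sq i (mem_univ i)
    simp [hx, signedSum, zero_rpow hr.ne']
    positivity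
  set y := σ⁻¹ • x
  have hxy : x = σ • y := by rw [smul_inv_smul₀ hσ_pos.ne']
  have hy : ∑ i, y i ^ 2 = 1 := by
    simp only [y, Pi.smul_apply, smul_eq_mul, mul_pow, ← mul_sum, inv_pow, ← hσ_sq]
    exact inv_mul_cancel₀ (by positivity)
  have hmgf := sum_exp_signedSum_le y
  have hmgf_neg := sum_exp_signedSum_le (-y)
  rw [hy] at hmgf
  simp only [Pi.neg_apply, neg_sq, hy] at hmgf_neg
  calc ∑ ε : ι → Bool, |signedSum ε x| ^ r
      = σ ^ r * ∑ ε : ι → Bool, |signedSum ε y| ^ r := by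
        simp_rw [hxy, signedSum_smul, abs_mul, abs_of_pos hσ_pos,
          mul_rpow hσ_pos.le (abs_nonneg _), mul_sum]
    _ ≤ σ ^ r * ∑ ε : ι → Bool,
          (r / exp 1) ^ r * (exp (signedSum ε y) + exp (signedSum ε (-y))) := by
        gcongr with ε
        rw [signedSum_neg]
        exact abs_rpow_le_exp_add_exp hr _
    _ ≤ σ ^ r * ((r / exp 1) ^ r *
          (2 ^ Fintype.card ι * exp (1 / 2) + 2 ^ Fintype.card ι * exp (1 / 2))) := by
        rw [← mul_sum, sum_add_distrib]
        gcongr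
    _ = _ := by ring

end Khintchine

open Khintchine in
/-- lower half of Khintchine's inequality for every exponent `0 < r < ∞`. -/
theorem stmt_8 (r : ℝ) (hr : 0 < r) : ∃ C : ℝ, 0 < C ∧ ∀ (n : ℕ) (x : Fin n → ℝ),
    ((∑ ε : Fin n → Bool, |∑ i, (if ε i then (1 : ℝ) else -1) * x i| ^ r) / 2 ^ n)
        ^ (1 / r) ≤
      C * (∑ i, x i ^ 2) ^ ((1 : ℝ) / 2) := by
  set K := 2 * (r / exp 1) ^ r * exp (1 / 2)
  have hK : 0 < K := by positivity
  refine ⟨K ^ (1 / r), by positivity, fun n x => ?_⟩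
  have hmoment : (∑ ε : Fin n → Bool, |signedSum ε x| ^ r) / 2 ^ n ≤ K * √(∑ i, x i ^ 2) ^ r := by
    rw [div_le_iff₀' (by positivity)]
    simpa only [Fintype.card_fin] using sum_abs_signedSum_rpow_le hr x
  calc _ ≤ (K * √(∑ i, x i ^ 2) ^ r) ^ (1 / r) :=
        rpow_le_rpow (by positivity) hmoment (by positivity)
    _ = K ^ (1 / r) * (∑ i, x i ^ 2) ^ ((1 : ℝ) / 2) := by
      rw [mul_rpow hK.le (by positivity), ← rpow_mul (sqrt_nonneg _), mul_one_div_cancel hr.ne',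
        rpow_one, sqrt_eq_rpow]
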